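/- Fix real numbers γ_E > 0, α > 0, and R > 0. Then lim_{γ_D → ∞} γ_D · 𝒫₁(α·γ_D, γ_D, γ_E, R) = (2^R − 1)·(1 + 1/α) + 2^R·γ_E. In particular, with γ_R = α·γ_D and γ_E fixed, the Case I secrecy outage probability satisfies 𝒫₁ ≈ 𝓜₁·γ_D^{−1} with 𝓜₁ = (2^R − 1)(1 + 1/α) + 2^R·γ_E > 0 as γ_D → ∞, so the secrecy diversity order is 1. -/

import Mathlib

/-!
Substituting `t = 1 / γ_D`, the quantity `γ_D · 𝒫₁(α γ_D, γ_D, γ_E, R)` is the difference quotient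
`F(t) / t` at `0` of `F(t) = 1 - exp(-k t) (1 + m t)⁻¹` with `k = (2^R - 1)(1 + 1/α)` and
`m = 2^R γ_E`. Since `F(0) = 0`, it tends to `F'(0) = k + m`.
-/

open Filter Real

/-- Case I closed-form secrecy outage probability. -/
noncomputable def P1 (γR γD γE R : ℝ) : ℝ :=
  1 - Real.exp (-((2 : ℝ) ^ R - 1) / γR - ((2 : ℝ) ^ R - 1) / γD) *
    (1 + ((2 : ℝ) ^ R / γD) * γE)⁻¹

open Topology

theorem HasDerivAt.tendsto_smul_comp_inv_atTop {E : Type*} [NormedAddCommGroup E]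
    [NormedSpace ℝ E] {f : ℝ → E} {f' : E} (hf : HasDerivAt f f' 0) (h0 : f 0 = 0) :
    Tendsto (fun t : ℝ => t • f t⁻¹) atTop (𝓝 f') := by
  refine (((hasDerivAt_iff_tendsto_slope.1 hf).mono_left (nhdsGT_le_nhdsNE 0)).comp
    tendsto_inv_atTop_nhdsGT_zero).congr fun t => ?_
  simp [slope_def_module, h0]

theorem hasDerivAt_one_sub_exp_neg_mul_mul_inv (a b : ℝ) :
    HasDerivAt (fun t => 1 - exp (-a * t) * (1 + b * t)⁻¹) (a + b) 0 := by
  have hexp : HasDerivAt (fun t => exp (-a * t)) (-a) 0 := by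
    simpa using ((hasDerivAt_id (0 : ℝ)).const_mul (-a)).exp
  have hinv : HasDerivAt (fun t => (1 + b * t)⁻¹) (-b) 0 := by
    simpa using (((hasDerivAt_id (0 : ℝ)).const_mul b).const_add 1).fun_inv (by simp)
  simpa [add_comm] using (hexp.mul hinv).const_sub 1

theorem P1_mul_self (α γ γE R : ℝ) :
    P1 (α * γ) γ γE R =
      1 - exp (-(((2 : ℝ) ^ R - 1) * (1 + 1 / α)) * γ⁻¹) * (1 + (2 : ℝ) ^ R * γE * γ⁻¹)⁻¹ := by
  unfold P1
  ring_nf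

theorem case1_asymptotic_fixed_eve (γE α R : ℝ) (hγE : 0 < γE) (hα : 0 < α) (hR : 0 < R) :
    Tendsto (fun γD : ℝ => γD * P1 (α * γD) γD γE R) atTop
      (nhds (((2 : ℝ) ^ R - 1) * (1 + 1 / α) + (2 : ℝ) ^ R * γE)) ∧
    0 < ((2 : ℝ) ^ R - 1) * (1 + 1 / α) + (2 : ℝ) ^ R * γE := by
  refine ⟨?_, ?_⟩
  · simpa only [P1_mul_self, smul_eq_mul] using
      (hasDerivAt_one_sub_exp_neg_mul_mul_inv _ _).tendsto_smul_comp_inv_atTop (by simp)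
  · have h2R : 1 < (2 : ℝ) ^ R := one_lt_rpow (by norm_num) hR
    have hc : 0 < (2 : ℝ) ^ R - 1 := by linarith
    positivity
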